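/- Let J be a principal ideal of DMV_n. Then there exists a rational polyhedron P ⊆ [0,1]^n such that DMV_n / J is isomorphic to DMV_n|_P, the DMV-algebra of restrictions to P of continuous piecewise linear functions [0,1]^n → [0,1] with rational coefficients; namely P = V(J). -/

import Mathlib

open scoped BigOperators

/-- The unit cube `[0,1]^n` in `ℝ^n`. -/
def Cube (n : ℕ) : Set (Fin n → ℝ) := {x | ∀ i, 0 ≤ x i ∧ x i ≤ 1}

/-- Elements of the free `n`-generated DMV-algebra `DMV_n`: continuous
`[0,1]`-valued functions on the cube that are piecewise linear with rational
coefficients, i.e. there are finitely many affine functions with rational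
coefficients such that at every point `f` agrees with one of them. -/
def IsPWLQ {n : ℕ} (f : Cube n → ℝ) : Prop :=
  Continuous f ∧ (∀ x, 0 ≤ f x ∧ f x ≤ 1) ∧
  ∃ (k : ℕ) (c : Fin k → ℚ) (a : Fin k → Fin n → ℚ),
    ∀ x : Cube n, ∃ j, f x = (c j : ℝ) + ∑ i, (a j i : ℝ) * (x : Fin n → ℝ) i

/-- Elements of the free `n`-generated MV-algebra `MV_n`: continuous
`[0,1]`-valued functions on the cube that are piecewise linear with integer
coefficients. -/
def IsPWLZ {n : ℕ} (f : Cube n → ℝ) : Prop :=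
  Continuous f ∧ (∀ x, 0 ≤ f x ∧ f x ≤ 1) ∧
  ∃ (k : ℕ) (c : Fin k → ℤ) (a : Fin k → Fin n → ℤ),
    ∀ x : Cube n, ∃ j, f x = (c j : ℝ) + ∑ i, (a j i : ℝ) * (x : Fin n → ℝ) i

/-- Ideal of `DMV_n`: a set of elements of `DMV_n` containing `0`, downward closed,
and closed under the pointwise truncated sum `f ⊕ g = min (f + g) 1`. -/
def IsIdealQ {n : ℕ} (J : Set (Cube n → ℝ)) : Prop :=
  (∀ f ∈ J, IsPWLQ f) ∧ ((fun _ => (0 : ℝ)) ∈ J) ∧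
  (∀ f ∈ J, ∀ g : Cube n → ℝ, IsPWLQ g → (∀ x, g x ≤ f x) → g ∈ J) ∧
  (∀ f ∈ J, ∀ g ∈ J, (fun x => min (f x + g x) 1) ∈ J)

/-- `g` belongs to the ideal `(f]` of `DMV_n` generated by `f`. -/
def memGen {n : ℕ} (f g : Cube n → ℝ) : Prop :=
  ∀ J : Set (Cube n → ℝ), IsIdealQ J → f ∈ J → g ∈ J

/-- Maximal ideal of `DMV_n`: a proper ideal maximal under inclusion. -/
def IsMaxIdealQ {n : ℕ} (M : Set (Cube n → ℝ)) : Prop :=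
  IsIdealQ M ∧ (∃ g : Cube n → ℝ, IsPWLQ g ∧ g ∉ M) ∧
  ∀ J : Set (Cube n → ℝ), IsIdealQ J → (∃ g : Cube n → ℝ, IsPWLQ g ∧ g ∉ J) →
    M ⊆ J → J = M

/-- An MV-algebra: an abelian monoid `(A, ⊕, 0)` with an involution `*` satisfying
the Łukasiewicz axioms. -/
class MVAlgebra (A : Type) where
  oplus : A → A → A
  star : A → A
  zero : A
  oplus_assoc : ∀ x y z : A, oplus (oplus x y) z = oplus x (oplus y z)
  oplus_comm : ∀ x y : A, oplus x y = oplus y x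
  oplus_zero : ∀ x : A, oplus x zero = x
  star_star : ∀ x : A, star (star x) = x
  lukasiewicz : ∀ x y : A,
    oplus (star (oplus (star x) y)) y = oplus (star (oplus (star y) x)) x
  oplus_star_zero : ∀ x : A, oplus (star zero) x = star zero

namespace MVAlgebra

variable {A : Type} [MVAlgebra A]

/-- The MV-product `x ⊙ y = (x* ⊕ y*)*`. -/
def odot (x y : A) : A := star (oplus (star x) (star y))

/-- `n`-fold ⊕-sum of an element. -/
def nmul : ℕ → A → A
  | 0, _ => zero
  | n + 1, x => oplus (nmul n x) x

/-- The MV-order: `x ≤ y` iff `x ⊙ y* = 0`. -/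
def le (x y : A) : Prop := odot x (star y) = zero

end MVAlgebra

/-- A DMV-algebra: an MV-algebra with division operators `δ_n` (`n ≥ 1`). -/
class DMVAlgebra (A : Type) extends MVAlgebra A where
  delta : ℕ → A → A
  delta_nmul : ∀ n : ℕ, 1 ≤ n → ∀ x : A, MVAlgebra.nmul n (delta n x) = x
  delta_odot : ∀ n : ℕ, 1 ≤ n → ∀ x : A,
    MVAlgebra.odot (delta n x) (MVAlgebra.nmul (n - 1) (delta n x)) = MVAlgebra.zero

/-- Ideal of an MV-algebra. -/
def IsMVIdeal {A : Type} [MVAlgebra A] (I : Set A) : Prop :=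
  MVAlgebra.zero ∈ I ∧ (∀ x ∈ I, ∀ y : A, MVAlgebra.le y x → y ∈ I) ∧
  ∀ x ∈ I, ∀ y ∈ I, MVAlgebra.oplus x y ∈ I

/-- Maximal ideal of an MV-algebra. -/
def IsMaximalMVIdeal {A : Type} [MVAlgebra A] (I : Set A) : Prop :=
  IsMVIdeal I ∧ I ≠ Set.univ ∧
  ∀ J : Set A, IsMVIdeal J → J ≠ Set.univ → I ⊆ J → J = I

/-- Semisimplicity: the intersection of all maximal ideals is `{0}`. -/
def IsSemisimple (A : Type) [MVAlgebra A] : Prop :=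
  ∀ x : A, (∀ I : Set A, IsMaximalMVIdeal I → x ∈ I) → x = MVAlgebra.zero

/-- `π` presents the DMV-algebra `D` as the quotient of the free DMV-algebra `DMV_n`
by the ideal `J`: it is a surjective DMV-homomorphism (with respect to the pointwise
operations of `DMV_n`) whose kernel is `J`. -/
def IsQuotientByIdeal {n : ℕ} (J : Set (Cube n → ℝ)) (D : Type) [DMVAlgebra D]
    (π : {f : Cube n → ℝ // IsPWLQ f} → D) : Prop :=
  Function.Surjective π ∧
  (∀ f g h : {f : Cube n → ℝ // IsPWLQ f},
    (∀ x, h.1 x = min (f.1 x + g.1 x) 1) → π h = MVAlgebra.oplus (π f) (π g)) ∧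
  (∀ f h : {f : Cube n → ℝ // IsPWLQ f},
    (∀ x, h.1 x = 1 - f.1 x) → π h = MVAlgebra.star (π f)) ∧
  (∀ k : ℕ, 1 ≤ k → ∀ f h : {f : Cube n → ℝ // IsPWLQ f},
    (∀ x, h.1 x = f.1 x / (k : ℝ)) → π h = DMVAlgebra.delta k (π f)) ∧
  (∀ f : {f : Cube n → ℝ // IsPWLQ f}, π f = MVAlgebra.zero ↔ f.1 ∈ J)

/-- A point of `ℝ^n` with rational coordinates. -/
def HasRatCoords {n : ℕ} (v : Fin n → ℝ) : Prop := ∀ i, ∃ q : ℚ, v i = (q : ℝ)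

/-- A rational polyhedron in `ℝ^n`: a finite union of simplexes (convex hulls of
affinely independent finite sets) all of whose vertices have rational coordinates. -/
def IsRatPoly {n : ℕ} (P : Set (Fin n → ℝ)) : Prop :=
  ∃ (k : ℕ) (V : Fin k → Finset (Fin n → ℝ)),
    (∀ j, (∀ v ∈ V j, HasRatCoords v) ∧
      AffineIndependent ℝ ((↑) : ((V j : Set (Fin n → ℝ))) → (Fin n → ℝ))) ∧
    P = ⋃ j, convexHull ℝ (V j : Set (Fin n → ℝ))

/-!
On each cell of a subdivision of the cube into rational polytopes on which the finitely many
affine pieces of the functions involved are linearly ordered, a function of `DMV_n` is affine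
(a continuous selection of pairwise comparable affine maps on a convex set is one of them).
A bounded rational polyhedron is the convex hull of its vertices, which are rational, so by
Carathéodory the zero set `V(f₀)`, a finite union of such polytopes, is a rational polyhedron.
If `u ∈ DMV_n` vanishes on `V(f₀)`, comparing the affine maps `u` and `f₀` at the vertices of
each cell gives `u ≤ m f₀`, so `u ∈ (f₀]`: the principal ideal consists exactly of the
functions vanishing on `V(f₀)`. Applied to the truncated differences of `g` and `h`, this
shows `π g = π h` iff `g = h` on `V(f₀)`, i.e. restriction to `V(f₀)` is well defined and
injective on `DMV_n / (f₀]`.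
-/

section

open Finset
open scoped Pointwise Matrix

variable {n : ℕ}

def ratAffine (p : ℚ × (Fin n → ℚ)) : (Fin n → ℝ) →ᵃ[ℝ] ℝ where
  toFun x := p.1 + ∑ i, (p.2 i : ℝ) * x i
  linear := ∑ i, (p.2 i : ℝ) • LinearMap.proj i
  map_vadd' x v := by
    simp only [Pi.vadd_apply', vadd_eq_add, mul_add, sum_add_distrib, LinearMap.coe_sum,
      LinearMap.coe_smul, LinearMap.coe_proj, Finset.sum_apply, Pi.smul_apply, Function.eval,
      smul_eq_mul]
    ring

@[simp]
theorem ratAffine_apply (p : ℚ × (Fin n → ℚ)) (x : Fin n → ℝ) :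
    ratAffine p x = p.1 + ∑ i, (p.2 i : ℝ) * x i := rfl

theorem ratAffine_linear_apply (p : ℚ × (Fin n → ℚ)) (d : Fin n → ℝ) :
    (ratAffine p).linear d = ∑ i, (p.2 i : ℝ) * d i := by
  simp [ratAffine]

theorem ratAffine_add (p q : ℚ × (Fin n → ℚ)) :
    ratAffine (p + q) = ratAffine p + ratAffine q := by
  ext x
  simp only [ratAffine_apply, Prod.fst_add, Prod.snd_add, Pi.add_apply, Rat.cast_add, add_mul,
    Finset.sum_add_distrib, AffineMap.coe_add]
  ring

theorem ratAffine_sub (p q : ℚ × (Fin n → ℚ)) :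
    ratAffine (p - q) = ratAffine p - ratAffine q := by
  ext x
  simp only [ratAffine_apply, Prod.fst_sub, Prod.snd_sub, Pi.sub_apply, Rat.cast_sub, sub_mul,
    Finset.sum_sub_distrib, AffineMap.coe_sub]
  ring

theorem ratAffine_const (c : ℚ) (x : Fin n → ℝ) : ratAffine (c, 0) x = c := by
  simp

def HasPieces (f : Cube n → ℝ) (S : Finset (ℚ × (Fin n → ℚ))) : Prop :=
  ∀ x : Cube n, ∃ p ∈ S, f x = ratAffine p x

theorem HasPieces.mono {f : Cube n → ℝ} {S T : Finset (ℚ × (Fin n → ℚ))} (hf : HasPieces f S)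
    (hST : S ⊆ T) : HasPieces f T := fun x =>
  let ⟨p, hp, hfx⟩ := hf x
  ⟨p, hST hp, hfx⟩

theorem IsPWLQ.exists_hasPieces {f : Cube n → ℝ} (hf : IsPWLQ f) : ∃ S, HasPieces f S := by
  classical
  obtain ⟨-, -, k, c, a, h⟩ := hf
  refine ⟨univ.image fun j => (c j, a j), fun x => ?_⟩
  obtain ⟨j, hj⟩ := h x
  exact ⟨(c j, a j), mem_image_of_mem _ (mem_univ j), hj⟩

theorem isPWLQ_of_hasPieces {f : Cube n → ℝ} (hcont : Continuous f)
    (hbd : ∀ x, 0 ≤ f x ∧ f x ≤ 1) {S : Finset (ℚ × (Fin n → ℚ))} (hS : HasPieces f S) :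
    IsPWLQ f := by
  refine ⟨hcont, hbd, S.card, fun j => (S.equivFin.symm j).1.1,
    fun j => (S.equivFin.symm j).1.2, fun x => ?_⟩
  obtain ⟨p, hp, hfx⟩ := hS x
  exact ⟨S.equivFin ⟨p, hp⟩, by simpa using hfx⟩

theorem isPWLQ_zero : IsPWLQ (fun _ : Cube n => (0 : ℝ)) :=
  isPWLQ_of_hasPieces continuous_const (fun _ => by norm_num) (S := {(0, 0)})
    fun _ => ⟨_, mem_singleton_self _, by simp⟩

theorem IsPWLQ.one_sub {f : Cube n → ℝ} (hf : IsPWLQ f) : IsPWLQ (fun x => 1 - f x) := by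
  classical
  obtain ⟨S, hS⟩ := hf.exists_hasPieces
  refine isPWLQ_of_hasPieces (continuous_const.sub hf.1)
    (fun x => ⟨by linarith [(hf.2.1 x).2], by linarith [(hf.2.1 x).1]⟩)
    (S := S.image fun p => (1, 0) - p) fun x => ?_
  obtain ⟨p, hp, hfx⟩ := hS x
  exact ⟨_, mem_image_of_mem _ hp, by simp only [ratAffine_sub, AffineMap.coe_sub, Pi.sub_apply,
    ratAffine_const, hfx, Rat.cast_one]⟩

theorem IsPWLQ.min_add {f g : Cube n → ℝ} (hf : IsPWLQ f) (hg : IsPWLQ g) :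
    IsPWLQ (fun x => min (f x + g x) 1) := by
  classical
  obtain ⟨S, hS⟩ := hf.exists_hasPieces
  obtain ⟨T, hT⟩ := hg.exists_hasPieces
  refine isPWLQ_of_hasPieces ((hf.1.add hg.1).min continuous_const)
    (fun x => ⟨le_min (add_nonneg (hf.2.1 x).1 (hg.2.1 x).1) zero_le_one, min_le_right _ _⟩)
    (S := insert (1, 0) (S + T)) fun x => ?_
  rcases le_or_gt (f x + g x) 1 with h | h
  · obtain ⟨p, hp, hfx⟩ := hS x
    obtain ⟨q, hq, hgx⟩ := hT x
    refine ⟨p + q, mem_insert_of_mem (add_mem_add hp hq), ?_⟩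
    rw [min_eq_left h, ratAffine_add, AffineMap.coe_add, Pi.add_apply, hfx, hgx]
  · exact ⟨(1, 0), mem_insert_self _ _, by rw [min_eq_right h.le, ratAffine_const, Rat.cast_one]⟩

theorem isIdealQ_setOf_eqOn_zero (Z : Set (Cube n)) :
    IsIdealQ {g : Cube n → ℝ | IsPWLQ g ∧ ∀ x ∈ Z, g x = 0} := by
  refine ⟨fun f hf => hf.1, ⟨isPWLQ_zero, fun _ _ => rfl⟩, ?_, ?_⟩
  · exact fun f hf g hg hgf => ⟨hg, fun x hx =>
      le_antisymm (hf.2 x hx ▸ hgf x) (hg.2.1 x).1⟩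
  · exact fun f hf g hg => ⟨hf.1.min_add hg.1, fun x hx => by simp [hf.2 x hx, hg.2 x hx]⟩

theorem memGen.eq_zero {f₀ g : Cube n → ℝ} (hg : memGen f₀ g) (hf₀ : IsPWLQ f₀) {x : Cube n}
    (hx : f₀ x = 0) : g x = 0 :=
  (hg _ (isIdealQ_setOf_eqOn_zero {y | f₀ y = 0}) ⟨hf₀, fun _ hy => hy⟩).2 x hx

theorem memGen_self (f₀ : Cube n → ℝ) : memGen f₀ f₀ := fun _ _ h => h

theorem memGen_of_le_nat_mul {f₀ u : Cube n → ℝ} (hf₀ : IsPWLQ f₀) (hu : IsPWLQ u) (m : ℕ)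
    (h : ∀ x, u x ≤ m * f₀ x) : memGen f₀ u := by
  intro J hJ hf₀J
  have hmul : ∀ k : ℕ, (fun x => min ((k : ℝ) * f₀ x) 1) ∈ J := by
    intro k
    induction k with
    | zero => simpa using hJ.2.1
    | succ k ih =>
      convert hJ.2.2.2 _ ih f₀ hf₀J using 2 with x
      have := (hf₀.2.1 x).1
      push_cast
      rcases le_or_gt ((k : ℝ) * f₀ x) 1 with hk | hk
      · rw [min_eq_left hk, add_one_mul]
      · rw [min_eq_right hk.le, min_eq_right (by nlinarith), min_eq_right (by linarith)]
  exact hJ.2.2.1 _ (hmul m) u hu fun x => le_min (h x) (hu.2.1 x).2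

open Matrix in
theorem Matrix.exists_rat_eq_of_mulVec_eq {m k : Type*} [Fintype m] [Fintype k] [DecidableEq k]
    (A : Matrix m k ℚ) (b : m → ℚ) (y : k → ℝ)
    (hy : A.map (↑) *ᵥ y = fun i => (b i : ℝ))
    (hA : ∀ d, A.map ((↑) : ℚ → ℝ) *ᵥ d = 0 → d = 0) :
    ∃ q : k → ℚ, y = fun j => (q j : ℝ) := by
  -- solve the normal equations `Aᵀ A q = Aᵀ b` over `ℚ`: `Aᵀ A` has the kernel of `A`
  set c := Rat.castHom ℝ
  set G := Aᵀ * A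
  have hGmap : G.map c = (A.map c)ᵀ * A.map c := by rw [Matrix.map_mul, transpose_map]
  have hGker : ∀ d, G.map c *ᵥ d = 0 → d = 0 := fun d hd =>
    hA d ((SetLike.ext_iff.1 (ker_mulVecLin_transpose_mul_self (A.map c)) d).1
      (by rwa [← hGmap, LinearMap.mem_ker]))
  have hdet : IsUnit G.det := by
    refine isUnit_iff_ne_zero.2 fun h => ?_
    obtain ⟨d, hd0, hd⟩ := exists_mulVec_eq_zero_iff.2
      (by rw [← RingHom.mapMatrix_apply, ← RingHom.map_det, h, map_zero] : (G.map c).det = 0)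
    exact hd0 (hGker d hd)
  refine ⟨G⁻¹ *ᵥ (Aᵀ *ᵥ b), sub_eq_zero.1 (hGker _ ?_)⟩
  have hq : G *ᵥ (G⁻¹ *ᵥ (Aᵀ *ᵥ b)) = Aᵀ *ᵥ b := by
    rw [mulVec_mulVec, mul_nonsing_inv _ hdet, one_mulVec]
  have hcast : ∀ v : k → ℚ, (fun j => (v j : ℝ)) = c ∘ v := fun _ => rfl
  rw [mulVec_sub, sub_eq_zero, hcast, ← funext (RingHom.map_mulVec c G _), hq,
    funext (RingHom.map_mulVec c Aᵀ b), hGmap, ← mulVec_mulVec, transpose_map]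
  exact congrArg _ hy

def hPoly (S : Finset (ℚ × (Fin n → ℚ))) : Set (Fin n → ℝ) := {x | ∀ p ∈ S, ratAffine p x ≤ 0}

theorem hPoly_union (S T : Finset (ℚ × (Fin n → ℚ))) : hPoly (S ∪ T) = hPoly S ∩ hPoly T := by
  ext x
  simp only [hPoly, Set.mem_inter_iff, Set.mem_ofPred_eq, forall_mem_union]

theorem hPoly_anti {S T : Finset (ℚ × (Fin n → ℚ))} (h : S ⊆ T) : hPoly T ⊆ hPoly S :=
  fun _ hx p hp => hx p (h hp)

theorem convex_hPoly (S : Finset (ℚ × (Fin n → ℚ))) : Convex ℝ (hPoly S) := by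
  simp only [hPoly, Set.ofPred_forall]
  exact convex_iInter₂ fun p _ => (convex_Iic 0).affine_preimage (ratAffine p)

theorem isClosed_hPoly (S : Finset (ℚ × (Fin n → ℚ))) : IsClosed (hPoly S) := by
  simp only [hPoly, Set.ofPred_forall]
  exact isClosed_biInter fun p _ =>
    isClosed_le (ratAffine p).continuous_of_finiteDimensional continuous_const

def cubeConstraints (n : ℕ) : Finset (ℚ × (Fin n → ℚ)) :=
  univ.biUnion fun i => {(0, -Pi.single i 1), (-1, Pi.single i 1)}

theorem hPoly_cubeConstraints : hPoly (cubeConstraints n) = Cube n := by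
  ext x
  have hsingle : ∀ i, ∑ j, ((Pi.single (M := fun _ => ℚ) i 1 j : ℚ) : ℝ) * x j = x i :=
    fun i => by simp [Pi.single_apply, apply_ite ((↑) : ℚ → ℝ), ite_mul]
  simp only [hPoly, cubeConstraints, Set.mem_ofPred_eq, Finset.mem_biUnion, mem_univ, true_and,
    mem_insert, mem_singleton, forall_exists_index, Cube]
  constructor
  · intro h i
    have h₀ := h _ i (Or.inl rfl)
    have h₁ := h _ i (Or.inr rfl)
    simp only [ratAffine_apply, Pi.neg_apply, Rat.cast_neg, neg_mul, sum_neg_distrib, hsingle,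
      Rat.cast_zero, Rat.cast_one] at h₀ h₁
    constructor <;> linarith
  · rintro h p i (rfl | rfl) <;>
      simp only [ratAffine_apply, Pi.neg_apply, Rat.cast_neg, neg_mul, sum_neg_distrib, hsingle,
        Rat.cast_zero, Rat.cast_one] <;> linarith [h i]

theorem isCompact_cube : IsCompact (Cube n) := by
  convert isCompact_univ_pi fun _ : Fin n => isCompact_Icc (a := (0 : ℝ)) (b := 1)
  ext x
  simp [Cube, Pi.le_def, forall_and]

def IsVertex (S : Finset (ℚ × (Fin n → ℚ))) (x : Fin n → ℝ) : Prop :=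
  x ∈ hPoly S ∧
    ∀ d : Fin n → ℝ, (∀ p ∈ S, ratAffine p x = 0 → (ratAffine p).linear d = 0) → d = 0

theorem finite_setOf_isVertex (S : Finset (ℚ × (Fin n → ℚ))) : {x | IsVertex S x}.Finite := by
  classical
  refine Set.Finite.of_finite_image (f := fun x => S.filter fun p => ratAffine p x = 0)
    (S.powerset.finite_toSet.subset ?_) fun x hx y _ hxy => ?_
  · rintro _ ⟨x, -, rfl⟩
    exact mem_powerset.2 (filter_subset _ _)
  · refine sub_eq_zero.1 (hx.2 _ fun p hp hpx => ?_)
    have hpy : p ∈ S.filter fun p => ratAffine p x = 0 := mem_filter.2 ⟨hp, hpx⟩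
    dsimp only at hxy
    rw [hxy, mem_filter] at hpy
    rw [← vsub_eq_sub, AffineMap.linearMap_vsub, hpx, hpy.2, vsub_self]

theorem IsVertex.hasRatCoords {S : Finset (ℚ × (Fin n → ℚ))} {x : Fin n → ℝ}
    (hx : IsVertex S x) : HasRatCoords x := by
  classical
  set T := S.filter fun p => ratAffine p x = 0
  set A : Matrix T (Fin n) ℚ := Matrix.of fun p => p.1.2
  have hsol : A.map (↑) *ᵥ x = fun p => ((-p.1.1 : ℚ) : ℝ) := by
    ext p
    have := (mem_filter.1 p.2).2
    simp only [ratAffine_apply] at this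
    simp only [A, Matrix.mulVec, dotProduct, Matrix.map_apply, Matrix.of_apply, Rat.cast_neg]
    linarith
  have huniq : ∀ d, A.map ((↑) : ℚ → ℝ) *ᵥ d = 0 → d = 0 := fun d hd =>
    hx.2 d fun p hp hpx => by
      simpa [A, ratAffine_linear_apply, Matrix.mulVec, dotProduct] using
        congrFun hd ⟨p, mem_filter.2 ⟨hp, hpx⟩⟩
  obtain ⟨q, hq⟩ := Matrix.exists_rat_eq_of_mulVec_eq A _ x hsol huniq
  exact fun i => ⟨q i, congrFun hq i⟩

theorem isVertex_of_mem_extremePoints {S : Finset (ℚ × (Fin n → ℚ))} {x : Fin n → ℝ}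
    (hx : x ∈ (hPoly S).extremePoints ℝ) : IsVertex S x := by
  refine ⟨hx.1, fun d hd => ?_⟩
  have hline : ∀ p t, ratAffine p (x + t • d) = ratAffine p x + t * (ratAffine p).linear d :=
    fun p t => by rw [add_comm x, ← vadd_eq_add, AffineMap.map_vadd, map_smul, smul_eq_mul,
      vadd_eq_add, add_comm]
  -- moving along `± d` keeps the active constraints at `0` and the others negative
  have hev : ∀ᶠ t in nhds (0 : ℝ), x + t • d ∈ hPoly S := by
    refine (Filter.eventually_all_finset S).2 fun p hp => ?_
    rcases (hx.1 p hp).lt_or_eq with hlt | heq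
    · have hcont : Continuous fun t : ℝ => ratAffine p (x + t • d) :=
        (ratAffine p).continuous_of_finiteDimensional.comp (by fun_prop)
      exact (hcont.continuousAt.eventually_lt continuousAt_const (by simpa using hlt)).mono
        fun _ ht => ht.le
    · exact Filter.Eventually.of_forall fun t => by rw [hline, heq, hd p hp heq, mul_zero, add_zero]
  obtain ⟨ε, hε, hball⟩ := Metric.eventually_nhds_iff.1 hev
  have hmem : ∀ s : ℝ, |s| < ε → x + s • d ∈ hPoly S := fun s hs => hball (by simpa using hs)
  have hε2 : |ε / 2| < ε := by rw [abs_of_pos (half_pos hε)]; linarith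
  have hseg : x ∈ openSegment ℝ (x + (ε / 2) • d) (x + (-(ε / 2)) • d) :=
    ⟨1 / 2, 1 / 2, by norm_num, by norm_num, by norm_num, by module⟩
  have := hx.2 (hmem _ hε2) (hmem _ (by rwa [abs_neg])) hseg
  simpa [hε.ne'] using this

theorem exists_hasRatCoords_convexHull_eq_hPoly {S : Finset (ℚ × (Fin n → ℚ))}
    (hS : hPoly S ⊆ Cube n) :
    ∃ V : Finset (Fin n → ℝ), (∀ v ∈ V, HasRatCoords v) ∧ hPoly S = convexHull ℝ (V : Set _) := by
  have hfin : ((hPoly S).extremePoints ℝ).Finite :=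
    (finite_setOf_isVertex S).subset fun _ hx => isVertex_of_mem_extremePoints hx
  refine ⟨hfin.toFinset, fun v hv => (isVertex_of_mem_extremePoints
    (hfin.mem_toFinset.1 hv)).hasRatCoords, ?_⟩
  -- Krein–Milman, with a finite set of extreme points
  rw [hfin.coe_toFinset, ← ((hfin.isCompact_convexHull (𝕜 := ℝ)).isClosed).closure_eq,
    closure_convexHull_extremePoints (isCompact_cube.of_isClosed_subset (isClosed_hPoly S) hS)
      (convex_hPoly S)]

theorem isRatPoly_biUnion_hPoly {𝒯 : Set (Finset (ℚ × (Fin n → ℚ)))} (h𝒯 : 𝒯.Finite)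
    (hcube : ∀ T ∈ 𝒯, hPoly T ⊆ Cube n) : IsRatPoly (⋃ T ∈ 𝒯, hPoly T) := by
  choose! V hVrat hV using fun T hT => exists_hasRatCoords_convexHull_eq_hPoly (hcube T hT)
  -- by Carathéodory, each polytope is the union of the simplices on its vertices
  set 𝒮 : Set (Finset (Fin n → ℝ)) := {t : Finset (Fin n → ℝ) | ∃ T ∈ 𝒯, t ⊆ V T ∧
    AffineIndependent ℝ ((↑) : ((t : Set (Fin n → ℝ))) → Fin n → ℝ)}
  have h𝒮 : 𝒮.Finite := (h𝒯.biUnion fun T _ => (V T).powerset.finite_toSet).subset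
    fun t ⟨T, hT, hsub, _⟩ => Set.mem_biUnion hT (mem_powerset.2 hsub)
  obtain ⟨k, W, -, hW⟩ := h𝒮.fin_param
  refine ⟨k, W, fun j => ?_, ?_⟩
  · obtain ⟨T, hT, hsub, hai⟩ : W j ∈ 𝒮 := hW ▸ Set.mem_range_self j
    exact ⟨fun v hv => hVrat T hT v (hsub hv), hai⟩
  · have hunion : ⋃ j, convexHull ℝ (W j : Set (Fin n → ℝ)) =
        ⋃ t ∈ 𝒮, convexHull ℝ (t : Set (Fin n → ℝ)) := by
      rw [← hW, Set.biUnion_range]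
    rw [hunion]
    refine Set.Subset.antisymm (Set.iUnion₂_subset fun T hT x hx => ?_)
      (Set.iUnion₂_subset fun t ⟨T, hT, hsub, _⟩ => ?_)
    · rw [hV T hT, convexHull_eq_union] at hx
      simp only [Set.mem_iUnion] at hx
      obtain ⟨t, hsub, hai, hxt⟩ := hx
      exact Set.mem_biUnion ⟨T, hT, coe_subset.1 hsub, hai⟩ hxt
    · refine subset_trans ?_ (Set.subset_biUnion_of_mem (u := hPoly) hT)
      rw [hV T hT]
      exact convexHull_mono (coe_subset.2 hsub)

section Comparable

variable {E ι : Type*} [AddCommGroup E] [Module ℝ E]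

open AffineMap

theorem AffineMap.apply_lineMap_lt {f g : E →ᵃ[ℝ] ℝ} {a b : E} (ha : f a < g a) (hb : f b ≤ g b)
    {t : ℝ} (ht₀ : 0 ≤ t) (ht₁ : t < 1) : f (lineMap a b t) < g (lineMap a b t) := by
  rw [apply_lineMap, apply_lineMap, lineMap_apply_ring', lineMap_apply_ring']
  nlinarith

theorem Convex.exists_forall_lt_of_le [Finite ι] {C : Set E} (hC : Convex ℝ C)
    (hne : C.Nonempty) (L : ι → E →ᵃ[ℝ] ℝ) :
    ∃ z ∈ C, ∀ i j, (∀ x ∈ C, L i x ≤ L j x) → (∃ x ∈ C, L i x < L j x) → L i z < L j z := by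
  have := Fintype.ofFinite ι
  classical
  suffices h : ∀ s : Finset (ι × ι), ∃ z ∈ C, ∀ q ∈ s, (∀ x ∈ C, L q.1 x ≤ L q.2 x) →
      (∃ x ∈ C, L q.1 x < L q.2 x) → L q.1 z < L q.2 z by
    obtain ⟨z, hz, hzlt⟩ := h univ
    exact ⟨z, hz, fun i j => hzlt (i, j) (mem_univ _)⟩
  intro s
  induction s using Finset.induction_on with
  | empty =>
    obtain ⟨z, hz⟩ := hne
    exact ⟨z, hz, by simp⟩
  | insert q s _ ih =>
    obtain ⟨z, hz, hzlt⟩ := ih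
    by_cases hq : (∀ x ∈ C, L q.1 x ≤ L q.2 x) ∧ ∃ x ∈ C, L q.1 x < L q.2 x
    · obtain ⟨hqle, y, hy, hqy⟩ := hq
      -- the midpoint of `z` and `y` inherits the strict inequalities holding at either point
      have hmid : lineMap z y (1 / 2 : ℝ) = lineMap y z (1 / 2 : ℝ) := by
        rw [← lineMap_apply_one_sub]
        norm_num
      refine ⟨lineMap z y (1 / 2 : ℝ), hC.lineMap_mem hz hy ⟨by norm_num, by norm_num⟩, ?_⟩
      rintro r hr hrle ⟨x, hx, hrx⟩
      rcases mem_insert.1 hr with rfl | hr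
      · rw [hmid]
        exact apply_lineMap_lt hqy (hqle z hz) (by norm_num) (by norm_num)
      · exact apply_lineMap_lt (hzlt r hr hrle ⟨x, hx, hrx⟩) (hrle y hy) (by norm_num)
          (by norm_num)
    · refine ⟨z, hz, fun r hr hrle hrlt => ?_⟩
      rcases mem_insert.1 hr with rfl | hr
      · exact absurd ⟨hrle, hrlt⟩ hq
      · exact hzlt r hr hrle hrlt

theorem one_mem_of_Ico_subset_union {A B : Set ℝ} (hA : IsClosed A) (hB : IsClosed B)
    (h0 : 0 ∈ A) (hcover : Set.Ico 0 1 ⊆ A ∪ B) (hdisj : ∀ t ∈ Set.Ico (0 : ℝ) 1, t ∈ A → t ∉ B) :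
    (1 : ℝ) ∈ A := by
  have hIco : Set.Ico 0 1 ⊆ A := by
    intro t ht
    by_contra htA
    obtain ⟨s, hs, hsA, hsB⟩ := isPreconnected_closed_iff.1 isPreconnected_Ico A B hA hB hcover
      ⟨0, ⟨le_rfl, one_pos⟩, h0⟩ ⟨t, ht, (hcover ht).resolve_left htA⟩
    exact hdisj s hs hsA hsB
  exact closure_minimal hIco hA (by rw [closure_Ico zero_ne_one]; exact ⟨zero_le_one, le_rfl⟩)

variable [TopologicalSpace E] [IsTopologicalAddGroup E] [ContinuousSMul ℝ E]

theorem Convex.exists_eqOn_of_forall_le_or_le [Finite ι] {C : Set E} (hC : Convex ℝ C)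
    (hne : C.Nonempty) (L : ι → E →ᵃ[ℝ] ℝ)
    (hL : ∀ i j, (∀ x ∈ C, L i x ≤ L j x) ∨ ∀ x ∈ C, L j x ≤ L i x) {F : E → ℝ}
    (hF : ContinuousOn F C) (hsel : ∀ x ∈ C, ∃ i, F x = L i x) : ∃ i, Set.EqOn F (L i) C := by
  obtain ⟨z, hz, hzlt⟩ := hC.exists_forall_lt_of_le hne L
  obtain ⟨i₀, hi₀⟩ := hsel z hz
  refine ⟨i₀, fun x hx => ?_⟩
  set γ : ℝ → E := ⇑(lineMap z x : ℝ →ᵃ[ℝ] E)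
  have hγC : Set.MapsTo γ (Set.Icc 0 1) C := fun t ht => hC.lineMap_mem hz hx ht
  -- pieces that differ from `L i₀` somewhere on `C` differ from it on all of `[z, x)`
  have hsep : ∀ i, ¬ Set.EqOn (L i) (L i₀) C → ∀ t ∈ Set.Ico (0 : ℝ) 1,
      L i (γ t) ≠ L i₀ (γ t) := by
    intro i hi t ht
    rcases hL i i₀ with h | h
    · refine (apply_lineMap_lt (hzlt i i₀ h ?_) (h x hx) ht.1 ht.2).ne
      by_contra! hc
      exact hi fun y hy => le_antisymm (h y hy) (hc y hy)
    · refine (apply_lineMap_lt (hzlt i₀ i h ?_) (h x hx) ht.1 ht.2).ne'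
      by_contra! hc
      exact hi fun y hy => le_antisymm (hc y hy) (h y hy)
  set A : ι → Set ℝ := fun i => Set.Icc 0 1 ∩ (fun t => F (γ t) - L i (γ t)) ⁻¹' {0}
  have hA : ∀ i, IsClosed (A i) := fun i => by
    have hLγ : Continuous fun t => L i (γ t) := by
      simpa only [γ, apply_lineMap] using (lineMap_continuous (p := L i z) (q := L i x))
    exact ((hF.comp lineMap_continuous.continuousOn hγC).sub
      hLγ.continuousOn).preimage_isClosed_of_isClosed isClosed_Icc isClosed_singleton
  have hmemA : ∀ i t, t ∈ A i ↔ t ∈ Set.Icc (0 : ℝ) 1 ∧ F (γ t) = L i (γ t) := by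
    simp [A, sub_eq_zero]
  set B := ⋃ i ∈ {i | ¬ Set.EqOn (L i) (L i₀) C}, A i
  have hB : IsClosed B := (Set.toFinite _).isClosed_biUnion fun i _ => hA i
  -- on the connected set `[0, 1)`, `F` cannot switch from `L i₀` to a piece separated from it
  have h1 : (1 : ℝ) ∈ A i₀ := by
    refine one_mem_of_Ico_subset_union (hA i₀) hB
      ((hmemA i₀ 0).2 ⟨⟨le_rfl, zero_le_one⟩, by simpa [γ]⟩) (fun t ht => ?_) fun t ht htA htB => ?_
    · have htI := Set.Ico_subset_Icc_self ht
      obtain ⟨i, hi⟩ := hsel _ (hγC htI)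
      by_cases heq : Set.EqOn (L i) (L i₀) C
      · exact Or.inl ((hmemA i₀ t).2 ⟨htI, hi.trans (heq (hγC htI))⟩)
      · exact Or.inr (Set.mem_biUnion heq ((hmemA i t).2 ⟨htI, hi⟩))
    · obtain ⟨i, hi, hti⟩ := Set.mem_iUnion₂.1 htB
      exact hsep i hi t ht (((hmemA i t).1 hti).2.symm.trans ((hmemA i₀ t).1 htA).2)
  simpa [γ] using ((hmemA i₀ 1).1 h1).2

end Comparable

/-- The cell of `x`: the points of the cube at which the pieces in `S` are ordered as at `x`
(the constraint `p - q` encodes `p ≤ q`). -/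
noncomputable def cellConstraints (S : Finset (ℚ × (Fin n → ℚ))) (x : Fin n → ℝ) :
    Finset (ℚ × (Fin n → ℚ)) :=
  cubeConstraints n ∪
    ((S ×ˢ S).filter fun pq => ratAffine pq.1 x ≤ ratAffine pq.2 x).image fun pq => pq.1 - pq.2

theorem cellConstraints_subset (S : Finset (ℚ × (Fin n → ℚ))) (x : Fin n → ℝ) :
    cellConstraints S x ⊆ cubeConstraints n ∪ (S ×ˢ S).image fun pq => pq.1 - pq.2 :=
  union_subset_union_right (image_subset_image (filter_subset _ _))

theorem hPoly_cellConstraints_subset_cube (S : Finset (ℚ × (Fin n → ℚ))) (x : Fin n → ℝ) :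
    hPoly (cellConstraints S x) ⊆ Cube n :=
  hPoly_cubeConstraints (n := n) ▸ hPoly_anti subset_union_left

theorem mem_hPoly_cellConstraints_self (S : Finset (ℚ × (Fin n → ℚ))) {x : Fin n → ℝ}
    (hx : x ∈ Cube n) : x ∈ hPoly (cellConstraints S x) := by
  rw [cellConstraints, hPoly_union, hPoly_cubeConstraints]
  refine ⟨hx, fun r hr => ?_⟩
  obtain ⟨pq, hpq, rfl⟩ := mem_image.1 hr
  rw [ratAffine_sub, AffineMap.coe_sub, Pi.sub_apply, sub_nonpos]
  exact (mem_filter.1 hpq).2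

theorem le_or_le_on_hPoly_cellConstraints {S : Finset (ℚ × (Fin n → ℚ))} (x : Fin n → ℝ)
    {p q : ℚ × (Fin n → ℚ)} (hp : p ∈ S) (hq : q ∈ S) :
    (∀ y ∈ hPoly (cellConstraints S x), ratAffine p y ≤ ratAffine q y) ∨
      ∀ y ∈ hPoly (cellConstraints S x), ratAffine q y ≤ ratAffine p y := by
  have hmem : ∀ p ∈ S, ∀ q ∈ S, ratAffine p x ≤ ratAffine q x →
      ∀ y ∈ hPoly (cellConstraints S x), ratAffine p y ≤ ratAffine q y := by
    intro p hp q hq hpq y hy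
    have := hy (p - q) (mem_union_right _ (mem_image.2
      ⟨(p, q), mem_filter.2 ⟨mem_product.2 ⟨hp, hq⟩, hpq⟩, rfl⟩))
    rwa [ratAffine_sub, AffineMap.coe_sub, Pi.sub_apply, sub_nonpos] at this
  rcases le_total (ratAffine p x) (ratAffine q x) with h | h
  exacts [Or.inl (hmem p hp q hq h), Or.inr (hmem q hq p hp h)]

theorem HasPieces.exists_eqOn_hPoly_cellConstraints {f : Cube n → ℝ} (hf : Continuous f)
    {S : Finset (ℚ × (Fin n → ℚ))} (hS : HasPieces f S) {x : Fin n → ℝ} (hx : x ∈ Cube n) :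
    ∃ p ∈ S, ∀ y : Cube n, y.1 ∈ hPoly (cellConstraints S x) → f y = ratAffine p y := by
  classical
  set F : (Fin n → ℝ) → ℝ := fun y => if h : y ∈ Cube n then f ⟨y, h⟩ else 0
  have hF : ContinuousOn F (Cube n) := by
    rw [continuousOn_iff_continuous_domRestrict]
    convert hf using 1
    ext y
    simp [F, y.2]
  obtain ⟨⟨p, hp⟩, hFp⟩ := (convex_hPoly _).exists_eqOn_of_forall_le_or_le
    ⟨x, mem_hPoly_cellConstraints_self S hx⟩ (fun p : S => ratAffine p.1)
    (fun p q => le_or_le_on_hPoly_cellConstraints x p.2 q.2)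
    (hF.mono (hPoly_cellConstraints_subset_cube S x)) fun y hy => by
      obtain ⟨p, hp, hfp⟩ := hS ⟨y, hPoly_cellConstraints_subset_cube S x hy⟩
      exact ⟨⟨p, hp⟩, by simpa [F, hPoly_cellConstraints_subset_cube S x hy] using hfp⟩
  exact ⟨p, hp, fun y hy => by simpa [F, y.2] using hFp hy⟩

theorem exists_forall_convexHull_le_mul {E : Type*} [AddCommGroup E] [Module ℝ E] (V : Finset E)
    (A B : E →ᵃ[ℝ] ℝ) (hB : ∀ v ∈ V, 0 ≤ B v) (hAB : ∀ v ∈ V, B v = 0 → A v ≤ 0) :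
    ∃ M : ℝ, ∀ x ∈ convexHull ℝ (V : Set E), A x ≤ M * B x := by
  set M := ∑ v ∈ V, max 0 (A v / B v)
  have hmem : ∀ y, y ∈ (A - M • B) ⁻¹' Set.Iic 0 ↔ A y ≤ M * B y := fun y => by
    simp
  refine ⟨M, fun x hx => (hmem x).1 <|
    convexHull_min (fun v hv => (hmem v).2 ?_) ((convex_Iic 0).affine_preimage _) hx⟩
  rcases (hB v hv).eq_or_lt with h | h
  · simpa [← h] using hAB v hv h.symm
  · calc A v = A v / B v * B v := (div_mul_cancel₀ _ h.ne').symm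
      _ ≤ M * B v := mul_le_mul_of_nonneg_right ((le_max_right _ _).trans
          (single_le_sum (f := fun v => max 0 (A v / B v)) (fun _ _ => le_max_left _ _) hv)) h.le

theorem exists_forall_hPoly_cellConstraints_le_mul {f₀ u : Cube n → ℝ} (hf₀ : IsPWLQ f₀)
    (hu : IsPWLQ u) (hvan : ∀ x, f₀ x = 0 → u x = 0) {S : Finset (ℚ × (Fin n → ℚ))}
    (hSf : HasPieces f₀ S) (hSu : HasPieces u S) {x : Fin n → ℝ} (hx : x ∈ Cube n) :
    ∃ M : ℝ, ∀ y : Cube n, y.1 ∈ hPoly (cellConstraints S x) → u y ≤ M * f₀ y := by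
  obtain ⟨a, -, ha⟩ := hSu.exists_eqOn_hPoly_cellConstraints hu.1 hx
  obtain ⟨b, -, hb⟩ := hSf.exists_eqOn_hPoly_cellConstraints hf₀.1 hx
  have hcube := hPoly_cellConstraints_subset_cube S x
  obtain ⟨V, -, hV⟩ := exists_hasRatCoords_convexHull_eq_hPoly hcube
  have hVsub : ∀ v ∈ V, v ∈ hPoly (cellConstraints S x) := fun v hv =>
    hV ▸ subset_convexHull ℝ _ (mem_coe.2 hv)
  -- on the cell both functions are affine, so the bound can be read off at its vertices
  obtain ⟨M, hM⟩ := exists_forall_convexHull_le_mul V (ratAffine a) (ratAffine b)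
    (fun v hv => hb ⟨v, hcube (hVsub v hv)⟩ (hVsub v hv) ▸ (hf₀.2.1 _).1)
    fun v hv hbv => by
      rw [← ha ⟨v, hcube (hVsub v hv)⟩ (hVsub v hv),
        hvan _ (by rw [hb _ (hVsub v hv)]; exact hbv)]
  exact ⟨M, fun y hy => by rw [ha y hy, hb y hy]; exact hM y (hV ▸ hy)⟩

theorem exists_le_nat_mul_of_eq_zero {f₀ u : Cube n → ℝ} (hf₀ : IsPWLQ f₀) (hu : IsPWLQ u)
    (hvan : ∀ x, f₀ x = 0 → u x = 0) : ∃ m : ℕ, ∀ x, u x ≤ m * f₀ x := by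
  classical
  obtain ⟨Sf, hSf⟩ := hf₀.exists_hasPieces
  obtain ⟨Su, hSu⟩ := hu.exists_hasPieces
  set S := Sf ∪ Su
  have hcell : ∀ T ∈ cellConstraints S '' Cube n, ∃ M : ℝ,
      ∀ y : Cube n, y.1 ∈ hPoly T → u y ≤ M * f₀ y := by
    rintro _ ⟨x, hx, rfl⟩
    exact exists_forall_hPoly_cellConstraints_le_mul hf₀ hu hvan
      (hSf.mono subset_union_left) (hSu.mono subset_union_right) hx
  choose! M hM using hcell
  have hfin : (cellConstraints S '' Cube n).Finite :=
    (cubeConstraints n ∪ (S ×ˢ S).image fun pq => pq.1 - pq.2).powerset.finite_toSet.subset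
      (by rintro _ ⟨x, -, rfl⟩; exact mem_powerset.2 (cellConstraints_subset S x))
  obtain ⟨K, hK⟩ := (hfin.image M).bddAbove
  refine ⟨⌈K⌉₊, fun x => ?_⟩
  have hT : cellConstraints S x ∈ cellConstraints S '' Cube n := ⟨x, x.2, rfl⟩
  calc u x ≤ M (cellConstraints S x) * f₀ x :=
        hM _ hT x (mem_hPoly_cellConstraints_self S x.2)
    _ ≤ ⌈K⌉₊ * f₀ x := mul_le_mul_of_nonneg_right
        ((hK (Set.mem_image_of_mem M hT)).trans (Nat.le_ceil K)) (hf₀.2.1 x).1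

theorem isRatPoly_image_val_setOf_eq_zero {f₀ : Cube n → ℝ} (hf₀ : IsPWLQ f₀) :
    IsRatPoly (Subtype.val '' {x : Cube n | f₀ x = 0}) := by
  classical
  obtain ⟨S, hS⟩ := hf₀.exists_hasPieces
  set Z := Subtype.val '' {x : Cube n | f₀ x = 0}
  set U := cubeConstraints n ∪ (S ×ˢ S).image (fun pq => pq.1 - pq.2) ∪ S
  set 𝒯 := {T : Finset (ℚ × (Fin n → ℚ)) | T ⊆ U ∧ hPoly T ⊆ Z}
  have hZ : Z = ⋃ T ∈ 𝒯, hPoly T := by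
    refine Set.Subset.antisymm (fun z hz => ?_) (Set.iUnion₂_subset fun T hT => hT.2)
    obtain ⟨x, hx0, rfl⟩ := hz
    obtain ⟨b, hbS, hb⟩ := hS.exists_eqOn_hPoly_cellConstraints hf₀.1 x.2
    -- on the cell of `x` we have `f₀ = b ≥ 0`, so the zeros of `f₀` there are cut out by `b ≤ 0`
    refine Set.mem_biUnion (x := insert b (cellConstraints S x)) ⟨?_, fun y hy => ?_⟩ ?_
    · exact insert_subset (mem_union_right _ hbS)
        ((cellConstraints_subset S x).trans subset_union_left)
    · have hyT := hPoly_anti (subset_insert _ _) hy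
      have hyC := hPoly_cellConstraints_subset_cube S x hyT
      refine ⟨⟨y, hyC⟩, le_antisymm ?_ (hf₀.2.1 _).1, rfl⟩
      rw [hb ⟨y, hyC⟩ hyT]
      exact hy b (mem_insert_self _ _)
    · intro p hp
      rcases mem_insert.1 hp with rfl | hp
      · rw [← hb x (mem_hPoly_cellConstraints_self S x.2)]
        exact hx0.le
      · exact mem_hPoly_cellConstraints_self S x.2 p hp
  rw [hZ]
  exact isRatPoly_biUnion_hPoly (U.powerset.finite_toSet.subset fun T hT => mem_powerset.2 hT.1)
    fun T hT => hT.2.trans (Subtype.coe_image_subset _ _)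

theorem memGen_iff {f₀ u : Cube n → ℝ} (hf₀ : IsPWLQ f₀) (hu : IsPWLQ u) :
    memGen f₀ u ↔ ∀ x, f₀ x = 0 → u x = 0 := by
  refine ⟨fun hmem x hx => hmem.eq_zero hf₀ hx, fun hvan => ?_⟩
  obtain ⟨m, hm⟩ := exists_le_nat_mul_of_eq_zero hf₀ hu hvan
  exact memGen_of_le_nat_mul hf₀ hu m hm

theorem MVAlgebra.eq_of_star_oplus_eq_zero {A : Type} [MVAlgebra A] {x y : A}
    (hxy : star (oplus (star x) y) = zero) (hyx : star (oplus (star y) x) = zero) : x = y := by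
  have h := lukasiewicz x y
  rwa [hxy, hyx, oplus_comm zero, oplus_zero, oplus_comm zero, oplus_zero, eq_comm] at h

/-- The truncated difference `max (g - h) 0 = (g* ⊕ h)*` in `DMV_n`. -/
def truncSub (g h : {f : Cube n → ℝ // IsPWLQ f}) : {f : Cube n → ℝ // IsPWLQ f} :=
  ⟨fun x => 1 - min (1 - g.1 x + h.1 x) 1, (g.2.one_sub.min_add h.2).one_sub⟩

theorem truncSub_apply_eq_zero_iff (g h : {f : Cube n → ℝ // IsPWLQ f}) (x : Cube n) :
    (truncSub g h).1 x = 0 ↔ g.1 x ≤ h.1 x := by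
  simp only [truncSub, sub_eq_zero, eq_comm (a := (1 : ℝ)), min_eq_right_iff]
  constructor <;> intro h <;> linarith

section Quotient

variable {f₀ : Cube n → ℝ} {D : Type} [DMVAlgebra D] {π : {f : Cube n → ℝ // IsPWLQ f} → D}

theorem IsQuotientByIdeal.map_truncSub {J : Set (Cube n → ℝ)} (hπ : IsQuotientByIdeal J D π)
    (g h : {f : Cube n → ℝ // IsPWLQ f}) :
    π (truncSub g h) = MVAlgebra.star (MVAlgebra.oplus (MVAlgebra.star (π g)) (π h)) := by
  obtain ⟨-, hoplus, hstar, -, -⟩ := hπ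
  rw [hstar ⟨_, g.2.one_sub.min_add h.2⟩ _ fun _ => rfl, hoplus ⟨_, g.2.one_sub⟩ h _ fun _ => rfl,
    hstar g _ fun _ => rfl]

theorem IsQuotientByIdeal.map_truncSub_eq_zero_iff
    (hπ : IsQuotientByIdeal {g | memGen f₀ g} D π) (hf₀ : IsPWLQ f₀)
    (g h : {f : Cube n → ℝ // IsPWLQ f}) :
    π (truncSub g h) = MVAlgebra.zero ↔ ∀ x, f₀ x = 0 → g.1 x ≤ h.1 x := by
  simp only [hπ.2.2.2.2, Set.mem_ofPred_eq, memGen_iff hf₀ (truncSub g h).2,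
    truncSub_apply_eq_zero_iff]

theorem IsQuotientByIdeal.map_eq_map_iff (hπ : IsQuotientByIdeal {g | memGen f₀ g} D π)
    (hf₀ : IsPWLQ f₀) (g h : {f : Cube n → ℝ // IsPWLQ f}) :
    π g = π h ↔ ∀ x, f₀ x = 0 → g.1 x = h.1 x := by
  have hdiff := hπ.map_truncSub_eq_zero_iff hf₀
  constructor
  · intro hgh x hx
    have hle : ∀ g h : {f : Cube n → ℝ // IsPWLQ f}, π g = π h → g.1 x ≤ h.1 x :=
      fun g h hgh => (hdiff g h).1 (by
        rw [hπ.map_truncSub, hgh, ← hπ.map_truncSub, hdiff]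
        exact fun _ _ => le_rfl) x hx
    exact le_antisymm (hle g h hgh) (hle h g hgh.symm)
  · intro hgh
    refine MVAlgebra.eq_of_star_oplus_eq_zero ?_ ?_ <;> rw [← hπ.map_truncSub, hdiff]
    exacts [fun x hx => (hgh x hx).le, fun x hx => (hgh x hx).ge]

end Quotient

end

/-- Let `J = (f₀]` be a principal ideal of `DMV_n` and let `D` be the
quotient `DMV_n / J`. Then there is a rational polyhedron `P ⊆ [0,1]^n`, namely
`P = V(J)`, such that `D` is isomorphic to `DMV_n|_P`, the algebra of restrictions to
`P` of continuous piecewise linear functions with rational coefficients: the natural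
map `π f ↦ f|_P` is an injection of `D` into the functions on `P` (whose image is
exactly `DMV_n|_P`, by surjectivity of `π`). -/
theorem quotient_by_principal_iso_restriction (n : ℕ)
    (f₀ : Cube n → ℝ) (hf₀ : IsPWLQ f₀)
    (D : Type) [DMVAlgebra D]
    (π : {f : Cube n → ℝ // IsPWLQ f} → D)
    (hπ : IsQuotientByIdeal {g | memGen f₀ g} D π) :
    ∃ (P : Set (Fin n → ℝ)) (hP : P ⊆ Cube n), IsRatPoly P ∧
      -- `P = V(J)`
      (∀ x : Cube n, ((x : Fin n → ℝ) ∈ P ↔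
        ∀ g : Cube n → ℝ, memGen f₀ g → g x = 0)) ∧
      -- `D ≅ DMV_n|_P` via the natural map induced by restriction
      ∃ Φ : D → (P → ℝ), Function.Injective Φ ∧
        ∀ (g : {f : Cube n → ℝ // IsPWLQ f}) (y : P),
          Φ (π g) y = g.1 ⟨y.1, hP y.2⟩ := by
  have hV : ∀ x : Cube n, x.1 ∈ Subtype.val '' {x : Cube n | f₀ x = 0} ↔ f₀ x = 0 :=
    fun _ => Subtype.val_injective.mem_set_image
  refine ⟨_, Subtype.coe_image_subset _ _, isRatPoly_image_val_setOf_eq_zero hf₀,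
    fun x => (hV x).trans ⟨fun hx g hg => hg.eq_zero hf₀ hx, fun h => h f₀ (memGen_self f₀)⟩, ?_⟩
  set rep := Function.surjInv hπ.1
  refine ⟨fun d y => (rep d).1 ⟨y.1, Subtype.coe_image_subset _ _ y.2⟩, fun d d' hdd' => ?_,
    fun g y => (hπ.map_eq_map_iff hf₀ _ _).1 (Function.surjInv_eq hπ.1 (π g)) _ ((hV _).1 y.2)⟩
  rw [← Function.surjInv_eq hπ.1 d, ← Function.surjInv_eq hπ.1 d', hπ.map_eq_map_iff hf₀]
  exact fun x hx => congrFun hdd' ⟨x.1, (hV x).2 hx⟩
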